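/- For every ε ∈ (0,1], every real m with |m| ≤ 1, and every real x, exp(m · Ψ_1(x)) ≤ 1 + m·x + |x|^{1+ε}, where Ψ_1(x) = x for |x| ≤ 1 and Ψ_1(x) = sign(x) otherwise. -/
import Mathlib


noncomputable def huberScore1 (x : ℝ) : ℝ :=
  if |x| ≤ 1 then x else Real.sign x

lemma exp_le_quad' {t : ℝ} (ht : |t| ≤ 1) : Real.exp t ≤ 1 + t + t ^ 2 := by
  have h := Real.exp_bound ht (n := 2) (by norm_num)
  simp [Finset.sum_range_succ] at h
  have h2 := (abs_le.mp h).2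
  nlinarith [sq_abs t, sq_nonneg t]

lemma aux_exp_le' (ε m y : ℝ) (hε : 0 ≤ ε) (hm : |m| ≤ 1) (hy : 1 ≤ y) :
    Real.exp m ≤ 1 + m * y + y ^ (1 + ε) := by
  obtain ⟨hm1, hm2⟩ := abs_le.mp hm
  rcases le_or_gt m 0 with h | h
  · have h1 : Real.exp m ≤ 1 := Real.exp_le_one_iff.mpr h
    have h2 : y ^ (1 : ℝ) ≤ y ^ (1 + ε) :=
      Real.rpow_le_rpow_of_exponent_le hy (by linarith)
    rw [Real.rpow_one] at h2
    have h3 : -y ≤ m * y := by nlinarith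
    linarith
  · have h1 := exp_le_quad' hm
    have h2 : (1 : ℝ) ≤ y ^ (1 + ε) := Real.one_le_rpow hy (by linarith)
    have h3 : m ≤ m * y := by nlinarith
    have h4 : m ^ 2 ≤ 1 := by nlinarith
    linarith

theorem exp_huberScore_le (ε : ℝ) (hε : ε ∈ Set.Ioc (0 : ℝ) 1)
    (m : ℝ) (hm : |m| ≤ 1) (x : ℝ) :
    Real.exp (m * huberScore1 x) ≤ 1 + m * x + |x| ^ (1 + ε) := by
  obtain ⟨hε0, hε1⟩ := hε
  unfold huberScore1
  split_ifs with h
  · rcases eq_or_ne x 0 with rfl | hx0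
    · simp [Real.zero_rpow (show (1 : ℝ) + ε ≠ 0 by linarith)]
    obtain ⟨hm1, hm2⟩ := abs_le.mp hm
    have h1 : |m * x| ≤ 1 := by
      rw [abs_mul]
      exact mul_le_one₀ hm (abs_nonneg x) h
    have h2 := exp_le_quad' h1
    have hmsq : m ^ 2 ≤ 1 := by nlinarith
    have h3 : (m * x) ^ 2 ≤ x ^ 2 := by
      nlinarith [mul_le_mul_of_nonneg_right hmsq (sq_nonneg x)]
    have hax : 0 < |x| := abs_pos.mpr hx0
    have h4 : |x| ^ ((2 : ℕ) : ℝ) ≤ |x| ^ (1 + ε) :=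
      Real.rpow_le_rpow_of_exponent_ge hax h (by push_cast; linarith)
    rw [Real.rpow_natCast, sq_abs] at h4
    linarith
  · push_neg at h
    have hx0 : x ≠ 0 := by
      intro hx; rw [hx] at h; simp at h; linarith
    rcases hx0.lt_or_gt with hneg | hpos
    · rw [abs_of_neg hneg, Real.sign_of_neg hneg]
      have h2 := aux_exp_le' ε (-m) (-x) hε0.le (by rwa [abs_neg])
        (by rw [abs_of_neg hneg] at h; linarith)
      have e1 : m * (-1 : ℝ) = -m := by ring
      have e2 : -m * -x = m * x := by ring
      rw [e2] at h2
      rw [e1]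
      exact h2
    · rw [abs_of_pos hpos, Real.sign_of_pos hpos]
      have h2 := aux_exp_le' ε m x hε0.le hm (by rw [abs_of_pos hpos] at h; linarith)
      rw [mul_one]
      exact h2
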